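/- With H and L as in the 4-rotor model and 0 < θ < min(1/T₁, 1/T₄) (with T₁, T₄ > 0), there exist constants C₇, C₈ > 0 such that for all (q,p), L(e^{θH})(q,p) ≤ (C₇ − C₈(p₁² + p₄²))·e^{θH(q,p)}. -/

import Mathlib

noncomputable section

/-- Partial derivative with respect to the position `q i`. -/
def pdq (f : (Fin 4 → ℝ) → (Fin 4 → ℝ) → ℝ) (i : Fin 4) (q p : Fin 4 → ℝ) : ℝ :=
  deriv (fun t => f (Function.update q i t) p) (q i)

/-- Partial derivative with respect to the momentum `p i`. -/
def pdp (f : (Fin 4 → ℝ) → (Fin 4 → ℝ) → ℝ) (i : Fin 4) (q p : Fin 4 → ℝ) : ℝ :=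
  deriv (fun t => f q (Function.update p i t)) (p i)

/-- The generator of the 4-rotor chain with two Langevin thermostats. -/
def gen (WL WC WR : ℝ → ℝ) (γ1 γ4 T1 T4 : ℝ)
    (f : (Fin 4 → ℝ) → (Fin 4 → ℝ) → ℝ) (q p : Fin 4 → ℝ) : ℝ :=
  (∑ i, p i * pdq f i q p)
  + deriv WL (q 1 - q 0) * (pdp f 0 q p - pdp f 1 q p)
  + deriv WC (q 2 - q 1) * (pdp f 1 q p - pdp f 2 q p)
  + deriv WR (q 2 - q 3) * (pdp f 3 q p - pdp f 2 q p)
  + (-γ1 * p 0 * pdp f 0 q p + γ1 * T1 * pdp (pdp f 0) 0 q p)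
  + (-γ4 * p 3 * pdp f 3 q p + γ4 * T4 * pdp (pdp f 3) 3 q p)

/-- The Hamiltonian of the 4-rotor chain. -/
def Ham (WL WC WR : ℝ → ℝ) (q p : Fin 4 → ℝ) : ℝ :=
  (∑ i, (p i)^2 / 2) + WL (q 1 - q 0) + WC (q 2 - q 1) + WR (q 2 - q 3)

namespace Stmt10Aux

variable (WL WC WR : ℝ → ℝ)

lemma ham_update_p (q p : Fin 4 → ℝ) (i : Fin 4) (t : ℝ) :
    Ham WL WC WR q (Function.update p i t) = Ham WL WC WR q p - (p i)^2/2 + t^2/2 := by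
  fin_cases i <;> simp [Ham, Fin.sum_univ_four, Function.update] <;> ring

lemma ham_update_q0 (q p : Fin 4 → ℝ) (t : ℝ) :
    Ham WL WC WR (Function.update q 0 t) p
      = Ham WL WC WR q p - WL (q 1 - q 0) + WL (q 1 - t) := by
  simp [Ham, Function.update]; ring

lemma ham_update_q1 (q p : Fin 4 → ℝ) (t : ℝ) :
    Ham WL WC WR (Function.update q 1 t) p
      = Ham WL WC WR q p - WL (q 1 - q 0) - WC (q 2 - q 1)
        + (WL (t - q 0) + WC (q 2 - t)) := by
  simp [Ham, Function.update]; ring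

lemma ham_update_q2 (q p : Fin 4 → ℝ) (t : ℝ) :
    Ham WL WC WR (Function.update q 2 t) p
      = Ham WL WC WR q p - WC (q 2 - q 1) - WR (q 2 - q 3)
        + (WC (t - q 1) + WR (t - q 3)) := by
  simp [Ham, Function.update]; ring

lemma ham_update_q3 (q p : Fin 4 → ℝ) (t : ℝ) :
    Ham WL WC WR (Function.update q 3 t) p
      = Ham WL WC WR q p - WR (q 2 - q 3) + WR (q 2 - t) := by
  simp [Ham, Function.update]; try ring

lemma key (θ c : ℝ) {g : ℝ → ℝ} {g' x : ℝ} (hg : HasDerivAt g g' x) :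
    deriv (fun t => Real.exp (θ * (c + g t))) x
      = θ * g' * Real.exp (θ * (c + g x)) := by
  have h := ((hg.const_add c).const_mul θ).exp
  rw [h.deriv]; ring

lemma sq_half (x : ℝ) : HasDerivAt (fun t : ℝ => t^2/2) x x := by
  have h := (hasDerivAt_pow 2 x).div_const 2
  norm_num at h
  simpa [mul_comm, mul_div_assoc] using h

lemma pdp_f (θ : ℝ) (q p : Fin 4 → ℝ) (i : Fin 4) :
    pdp (fun q p => Real.exp (θ * Ham WL WC WR q p)) i q p
      = θ * p i * Real.exp (θ * Ham WL WC WR q p) := by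
  unfold pdp
  have hfun : (fun t => Real.exp (θ * Ham WL WC WR q (Function.update p i t)))
      = fun t => Real.exp (θ * ((Ham WL WC WR q p - (p i)^2/2) + t^2/2)) := by
    funext t; rw [ham_update_p]
  rw [hfun, key θ _ (sq_half (p i))]
  have : Ham WL WC WR q p - (p i)^2/2 + (p i)^2/2 = Ham WL WC WR q p := by ring
  rw [this]

lemma pdp2_f (θ : ℝ) (q p : Fin 4 → ℝ) (i : Fin 4) :
    pdp (pdp (fun q p => Real.exp (θ * Ham WL WC WR q p)) i) i q p
      = (θ + θ^2 * (p i)^2) * Real.exp (θ * Ham WL WC WR q p) := by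
  conv_lhs => rw [pdp]
  have hfun : (fun t => pdp (fun q p => Real.exp (θ * Ham WL WC WR q p)) i q
      (Function.update p i t))
      = fun t => θ * t * Real.exp (θ * ((Ham WL WC WR q p - (p i)^2/2) + t^2/2)) := by
    funext t
    rw [pdp_f, Function.update_self, ham_update_p]
  rw [hfun]
  have h1 : HasDerivAt (fun t : ℝ => θ * t) θ (p i) := by simpa using (hasDerivAt_id (p i)).const_mul θ
  have h2 := (((sq_half (p i)).const_add (Ham WL WC WR q p - (p i)^2/2)).const_mul θ).exp
  have h := h1.mul h2
  rw [HasDerivAt.deriv (f := fun t => θ * t * Real.exp (θ * ((Ham WL WC WR q p - (p i)^2/2) + t^2/2))) h]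
  have : Ham WL WC WR q p - (p i)^2/2 + (p i)^2/2 = Ham WL WC WR q p := by ring
  rw [this]; ring

variable (hWL : ContDiff ℝ (⊤ : ℕ∞) WL) (hWC : ContDiff ℝ (⊤ : ℕ∞) WC) (hWR : ContDiff ℝ (⊤ : ℕ∞) WR)

section
include hWL

lemma pdq_f0 (θ : ℝ) (q p : Fin 4 → ℝ) :
    pdq (fun q p => Real.exp (θ * Ham WL WC WR q p)) 0 q p
      = θ * (-(deriv WL (q 1 - q 0))) * Real.exp (θ * Ham WL WC WR q p) := by
  unfold pdq
  have hfun : (fun t => Real.exp (θ * Ham WL WC WR (Function.update q 0 t) p))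
      = fun t => Real.exp (θ * ((Ham WL WC WR q p - WL (q 1 - q 0)) + WL (q 1 - t))) := by
    funext t; rw [ham_update_q0]
  have hin : HasDerivAt (fun t : ℝ => q 1 - t) (-1) (q 0) := by
    simpa using (hasDerivAt_id (q 0)).const_sub (q 1)
  have hW : HasDerivAt WL (deriv WL (q 1 - q 0)) (q 1 - q 0) :=
    ((hWL.differentiable (by simp)) _).hasDerivAt
  have hg : HasDerivAt (fun t => WL (q 1 - t)) (deriv WL (q 1 - q 0) * (-1)) (q 0) :=
    hW.comp (q 0) hin
  rw [hfun, key θ _ hg]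
  have : Ham WL WC WR q p - WL (q 1 - q 0) + WL (q 1 - q 0) = Ham WL WC WR q p := by ring
  rw [this]; ring
end

section
include hWL hWC

lemma pdq_f1 (θ : ℝ) (q p : Fin 4 → ℝ) :
    pdq (fun q p => Real.exp (θ * Ham WL WC WR q p)) 1 q p
      = θ * (deriv WL (q 1 - q 0) - deriv WC (q 2 - q 1))
          * Real.exp (θ * Ham WL WC WR q p) := by
  unfold pdq
  have hfun : (fun t => Real.exp (θ * Ham WL WC WR (Function.update q 1 t) p))
      = fun t => Real.exp (θ * ((Ham WL WC WR q p - WL (q 1 - q 0) - WC (q 2 - q 1))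
          + (WL (t - q 0) + WC (q 2 - t)))) := by
    funext t; rw [ham_update_q1]
  have hinL : HasDerivAt (fun t : ℝ => t - q 0) 1 (q 1) := by
    simpa using (hasDerivAt_id (q 1)).sub_const (q 0)
  have hinC : HasDerivAt (fun t : ℝ => q 2 - t) (-1) (q 1) := by
    simpa using (hasDerivAt_id (q 1)).const_sub (q 2)
  have hgL : HasDerivAt (fun t => WL (t - q 0)) (deriv WL (q 1 - q 0) * 1) (q 1) :=
    (((hWL.differentiable (by simp)) _).hasDerivAt).comp (q 1) hinL
  have hgC : HasDerivAt (fun t => WC (q 2 - t)) (deriv WC (q 2 - q 1) * (-1)) (q 1) :=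
    (((hWC.differentiable (by simp)) _).hasDerivAt).comp (q 1) hinC
  rw [hfun, key θ _ (g := fun t => WL (t - q 0) + WC (q 2 - t)) (hgL.add hgC)]
  have : Ham WL WC WR q p - WL (q 1 - q 0) - WC (q 2 - q 1)
      + (WL (q 1 - q 0) + WC (q 2 - q 1)) = Ham WL WC WR q p := by ring
  rw [this]; ring
end

section
include hWC hWR

lemma pdq_f2 (θ : ℝ) (q p : Fin 4 → ℝ) :
    pdq (fun q p => Real.exp (θ * Ham WL WC WR q p)) 2 q p
      = θ * (deriv WC (q 2 - q 1) + deriv WR (q 2 - q 3))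
          * Real.exp (θ * Ham WL WC WR q p) := by
  unfold pdq
  have hfun : (fun t => Real.exp (θ * Ham WL WC WR (Function.update q 2 t) p))
      = fun t => Real.exp (θ * ((Ham WL WC WR q p - WC (q 2 - q 1) - WR (q 2 - q 3))
          + (WC (t - q 1) + WR (t - q 3)))) := by
    funext t; rw [ham_update_q2]
  have hinC : HasDerivAt (fun t : ℝ => t - q 1) 1 (q 2) := by
    simpa using (hasDerivAt_id (q 2)).sub_const (q 1)
  have hinR : HasDerivAt (fun t : ℝ => t - q 3) 1 (q 2) := by
    simpa using (hasDerivAt_id (q 2)).sub_const (q 3)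
  have hgC : HasDerivAt (fun t => WC (t - q 1)) (deriv WC (q 2 - q 1) * 1) (q 2) :=
    (((hWC.differentiable (by simp)) _).hasDerivAt).comp (q 2) hinC
  have hgR : HasDerivAt (fun t => WR (t - q 3)) (deriv WR (q 2 - q 3) * 1) (q 2) :=
    (((hWR.differentiable (by simp)) _).hasDerivAt).comp (q 2) hinR
  rw [hfun, key θ _ (g := fun t => WC (t - q 1) + WR (t - q 3)) (hgC.add hgR)]
  have : Ham WL WC WR q p - WC (q 2 - q 1) - WR (q 2 - q 3)
      + (WC (q 2 - q 1) + WR (q 2 - q 3)) = Ham WL WC WR q p := by ring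
  rw [this]; ring
end

section
include hWR

lemma pdq_f3 (θ : ℝ) (q p : Fin 4 → ℝ) :
    pdq (fun q p => Real.exp (θ * Ham WL WC WR q p)) 3 q p
      = θ * (-(deriv WR (q 2 - q 3))) * Real.exp (θ * Ham WL WC WR q p) := by
  unfold pdq
  have hfun : (fun t => Real.exp (θ * Ham WL WC WR (Function.update q 3 t) p))
      = fun t => Real.exp (θ * ((Ham WL WC WR q p - WR (q 2 - q 3)) + WR (q 2 - t))) := by
    funext t; rw [ham_update_q3]
  have hin : HasDerivAt (fun t : ℝ => q 2 - t) (-1) (q 3) := by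
    simpa using (hasDerivAt_id (q 3)).const_sub (q 2)
  have hg : HasDerivAt (fun t => WR (q 2 - t)) (deriv WR (q 2 - q 3) * (-1)) (q 3) :=
    (((hWR.differentiable (by simp)) _).hasDerivAt).comp (q 3) hin
  rw [hfun, key θ _ hg]
  have : Ham WL WC WR q p - WR (q 2 - q 3) + WR (q 2 - q 3) = Ham WL WC WR q p := by ring
  rw [this]; ring
end

end Stmt10Aux

theorem stmt10 (WL WC WR : ℝ → ℝ)
    (hWL : ContDiff ℝ (⊤ : ℕ∞) WL) (hWC : ContDiff ℝ (⊤ : ℕ∞) WC) (hWR : ContDiff ℝ (⊤ : ℕ∞) WR)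
    (hWLper : ∀ s, WL (s + 2 * Real.pi) = WL s)
    (hWCper : ∀ s, WC (s + 2 * Real.pi) = WC s)
    (hWRper : ∀ s, WR (s + 2 * Real.pi) = WR s)
    (γ1 γ4 T1 T4 θ : ℝ) (hγ1 : 0 < γ1) (hγ4 : 0 < γ4) (hT1 : 0 < T1) (hT4 : 0 < T4)
    (hθ0 : 0 < θ) (hθ : θ < min (1 / T1) (1 / T4)) :
    ∃ C7 > (0:ℝ), ∃ C8 > (0:ℝ), ∀ q p : Fin 4 → ℝ,
      gen WL WC WR γ1 γ4 T1 T4 (fun q p => Real.exp (θ * Ham WL WC WR q p)) q p ≤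
        (C7 - C8 * ((p 0)^2 + (p 3)^2)) * Real.exp (θ * Ham WL WC WR q p) := by
  have hθT1 : θ * T1 < 1 := by
    have h1 : θ < 1 / T1 := lt_of_lt_of_le hθ (min_le_left _ _)
    calc θ * T1 < (1 / T1) * T1 := by exact mul_lt_mul_of_pos_right h1 hT1
    _ = 1 := by field_simp
  have hθT4 : θ * T4 < 1 := by
    have h1 : θ < 1 / T4 := lt_of_lt_of_le hθ (min_le_right _ _)
    calc θ * T4 < (1 / T4) * T4 := by exact mul_lt_mul_of_pos_right h1 hT4
    _ = 1 := by field_simp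
  set a := γ1 * (θ - θ^2 * T1) with ha_def
  set b := γ4 * (θ - θ^2 * T4) with hb_def
  have ha : 0 < a := by
    apply mul_pos hγ1
    nlinarith
  have hb : 0 < b := by
    apply mul_pos hγ4
    nlinarith
  refine ⟨θ * (γ1 * T1 + γ4 * T4), by positivity, min a b, lt_min ha hb, fun q p => ?_⟩
  have hgen : gen WL WC WR γ1 γ4 T1 T4 (fun q p => Real.exp (θ * Ham WL WC WR q p)) q p
      = (θ * (γ1 * T1 + γ4 * T4) - a * (p 0)^2 - b * (p 3)^2)
          * Real.exp (θ * Ham WL WC WR q p) := by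
    rw [gen, Fin.sum_univ_four,
      Stmt10Aux.pdq_f0 WL WC WR hWL θ q p,
      Stmt10Aux.pdq_f1 WL WC WR hWL hWC θ q p,
      Stmt10Aux.pdq_f2 WL WC WR hWC hWR θ q p,
      Stmt10Aux.pdq_f3 WL WC WR hWR θ q p,
      Stmt10Aux.pdp_f WL WC WR θ q p 0,
      Stmt10Aux.pdp_f WL WC WR θ q p 1,
      Stmt10Aux.pdp_f WL WC WR θ q p 2,
      Stmt10Aux.pdp_f WL WC WR θ q p 3,
      Stmt10Aux.pdp2_f WL WC WR θ q p 0,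
      Stmt10Aux.pdp2_f WL WC WR θ q p 3]
    ring
  rw [hgen]
  apply mul_le_mul_of_nonneg_right _ (Real.exp_pos _).le
  have h1 : min a b ≤ a := min_le_left _ _
  have h2 : min a b ≤ b := min_le_right _ _
  nlinarith [sq_nonneg (p 0), sq_nonneg (p 3)]
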